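/- arXiv:2205.15695 — 3 statements merged into one kernel-verified Lean document; each statement's English description precedes it below -/
import Mathlib

section
/- Let K ≥ 1 and n ≥ 1, and let 0 < λ_1 ≤ λ_2 ≤ … ≤ λ_K. For each type k let P_1^k, …, P_n^k be mutually independent random variables, with P_i^k exponentially distributed with mean λ_k. Enumerate all N = nK jobs as P_1, …, P_N, and define C_RR = Σ_j P_j + 2·Σ_{1≤i<j≤N} min(P_i, P_j) and C_OPT = Σ_j P_j + Σ_{1≤i<j≤N} min(P_i, P_j). Then E[C_RR] ≥ (2 − 4/(n+3))·E[C_OPT]. -/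
/-!
With `s = ∑ⱼ E[Pⱼ]` and `M = ∑_{i<j} E[min(Pᵢ, Pⱼ)]`, linearity gives `E[C_OPT] = s + M` and
`E[C_RR] = s + 2M`, so the bound amounts to `4M ≥ (n - 1) s`. The minimum of independent
exponentials is exponential with the sum of the rates, so every `E[min(Pᵢ, Pⱼ)]` is nonnegative
and equals `λₖ / 2` when both jobs have type `k`. The `n(n-1)/2` pairs of type `k` alone thus
contribute `(n - 1)/4` times the share `n λₖ` of type `k` in `s`.
-/

open MeasureTheory ProbabilityTheory Finset

namespace ProbabilityTheory

lemma expMeasure_Ioi {r t : ℝ} (hr : 0 < r) (ht : 0 ≤ t) :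
    expMeasure r (Set.Ioi t) = ENNReal.ofReal (Real.exp (-(r * t))) := by
  have := isProbabilityMeasure_expMeasure hr
  rw [← ofReal_measureReal, ← Set.compl_Iic, probReal_compl_eq_one_sub measurableSet_Iic,
    ← cdf_eq_real, cdf_expMeasure_eq hr, if_pos ht, sub_sub_cancel]

lemma expMeasure_Iio_of_nonpos {r x : ℝ} (hx : x ≤ 0) :
    expMeasure r (Set.Iio x) = 0 := by
  rw [expMeasure, gammaMeasure, withDensity_apply _ measurableSet_Iio]
  exact lintegral_gammaPDF_of_nonpos hx

end ProbabilityTheory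

section ExponentialVariables

variable {Ω : Type*} [MeasurableSpace Ω] {μ : Measure Ω}

lemma integrable_and_integral_eq_inv_of_measure_lt_eq_exp {Z : Ω → ℝ} (hZ : Measurable Z)
    (hZ0 : 0 ≤ᵐ[μ] Z) {c : ℝ} (hc : 0 < c)
    (htail : ∀ t, 0 < t → μ {ω | t < Z ω} = ENNReal.ofReal (Real.exp (-(c * t)))) :
    Integrable Z μ ∧ ∫ ω, Z ω ∂μ = c⁻¹ := by
  have hexp : IntegrableOn (fun t ↦ Real.exp (-(c * t))) (Set.Ioi 0) := by
    simpa only [neg_mul] using integrableOn_exp_mul_Ioi (neg_lt_zero.2 hc) 0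
  have hlint : ∫⁻ ω, ENNReal.ofReal (Z ω) ∂μ = ENNReal.ofReal c⁻¹ := by
    rw [lintegral_eq_lintegral_meas_lt μ hZ0 hZ.aemeasurable,
      setLIntegral_congr_fun measurableSet_Ioi htail,
      ← ofReal_integral_eq_lintegral_ofReal hexp (.of_forall fun _ ↦ (Real.exp_pos _).le)]
    simp only [← neg_mul]
    rw [integral_exp_mul_Ioi (neg_lt_zero.2 hc), mul_zero, Real.exp_zero, div_neg, neg_div,
      neg_neg, one_div]
  have hint : Integrable Z μ := by
    refine ⟨hZ.aestronglyMeasurable, ?_⟩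
    rw [hasFiniteIntegral_iff_ofReal hZ0, hlint]
    exact ENNReal.ofReal_lt_top
  refine ⟨hint, ?_⟩
  rw [integral_eq_lintegral_of_nonneg_ae hZ0 hZ.aestronglyMeasurable, hlint,
    ENNReal.toReal_ofReal (inv_nonneg.2 hc.le)]

variable {X Y : Ω → ℝ}

lemma measure_preimage_Ioi_of_map_eq_expMeasure (hX : Measurable X) {r : ℝ} (hr : 0 < r)
    (hXr : μ.map X = expMeasure r) {t : ℝ} (ht : 0 ≤ t) :
    μ (X ⁻¹' Set.Ioi t) = ENNReal.ofReal (Real.exp (-(r * t))) := by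
  rw [← expMeasure_Ioi hr ht, ← hXr, Measure.map_apply hX measurableSet_Ioi]

lemma ae_nonneg_of_map_eq_expMeasure (hX : Measurable X) {r : ℝ}
    (hXr : μ.map X = expMeasure r) : 0 ≤ᵐ[μ] X := by
  have h : μ (X ⁻¹' Set.Iio 0) = 0 := by
    rw [← Measure.map_apply hX measurableSet_Iio, hXr, expMeasure_Iio_of_nonpos le_rfl]
  filter_upwards [measure_eq_zero_iff_ae_notMem.1 h] with ω hω
  simpa using hω

lemma integrable_and_integral_of_map_eq_expMeasure (hX : Measurable X) {r : ℝ} (hr : 0 < r)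
    (hXr : μ.map X = expMeasure r) : Integrable X μ ∧ ∫ ω, X ω ∂μ = r⁻¹ :=
  integrable_and_integral_eq_inv_of_measure_lt_eq_exp hX (ae_nonneg_of_map_eq_expMeasure hX hXr)
    hr fun _ ht ↦ measure_preimage_Ioi_of_map_eq_expMeasure hX hr hXr ht.le

lemma integrable_and_integral_min_of_indepFun (hX : Measurable X) (hY : Measurable Y)
    {a b : ℝ} (ha : 0 < a) (hb : 0 < b) (hXa : μ.map X = expMeasure a)
    (hYb : μ.map Y = expMeasure b) (hXY : IndepFun X Y μ) :
    Integrable (fun ω ↦ min (X ω) (Y ω)) μ ∧ ∫ ω, min (X ω) (Y ω) ∂μ = (a + b)⁻¹ := by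
  refine integrable_and_integral_eq_inv_of_measure_lt_eq_exp (hX.min hY) ?_ (add_pos ha hb) ?_
  · filter_upwards [ae_nonneg_of_map_eq_expMeasure hX hXa,
      ae_nonneg_of_map_eq_expMeasure hY hYb] with ω hXω hYω
    exact le_min hXω hYω
  · intro t ht
    have hset : {ω | t < min (X ω) (Y ω)} = X ⁻¹' Set.Ioi t ∩ Y ⁻¹' Set.Ioi t := by
      ext ω; simp
    rw [hset, hXY.measure_inter_preimage_eq_mul _ _ measurableSet_Ioi measurableSet_Ioi,
      measure_preimage_Ioi_of_map_eq_expMeasure hX ha hXa ht.le,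
      measure_preimage_Ioi_of_map_eq_expMeasure hY hb hYb ht.le,
      ← ENNReal.ofReal_mul (Real.exp_pos _).le, ← Real.exp_add, add_mul, neg_add]

end ExponentialVariables

section PairSums

variable {ι : Type*} [Fintype ι] [LinearOrder ι] [LocallyFiniteOrderTop ι]
  [LocallyFiniteOrderBot ι]

lemma two_mul_sum_sum_Ioi_of_symm {R : Type*} [CommRing R] (f : ι → ι → R)
    (hf : ∀ i j, f i j = f j i) :
    2 * ∑ i, ∑ j ∈ Ioi i, f i j = ∑ i, ∑ j, f i j - ∑ i, f i i := by
  have hpair : ∀ i, ∑ j ∈ Ioi i, (f j i + f i j) = 2 * ∑ j ∈ Ioi i, f i j := fun i ↦ by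
    rw [mul_sum]
    exact sum_congr rfl fun j _ ↦ by rw [hf j i, two_mul]
  have hoff : ∀ i, ∑ j ∈ {i}ᶜ, f j i = ∑ j, f j i - f i i := fun i ↦ by
    rw [eq_sub_iff_add_eq, ← sum_compl_add_sum {i}, sum_singleton]
  rw [mul_sum, ← sum_congr rfl fun i _ ↦ hpair i, sum_sum_Ioi_add_eq_sum_sum_off_diag,
    sum_congr rfl fun i _ ↦ hoff i, sum_sub_distrib, sum_comm]

lemma le_sum_sum_Ioi_of_card_fiber {κ : Type*} [DecidableEq κ] (τ : ι → κ) {n : ℕ}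
    (hτ : ∀ i, #{j | τ j = τ i} = n) (w : κ → ℝ) (m : ι → ι → ℝ)
    (hm : ∀ i j, i < j → 0 ≤ m i j) (hsame : ∀ i j, i < j → τ i = τ j → w (τ i) / 2 ≤ m i j) :
    ((n : ℝ) - 1) / 4 * ∑ i, w (τ i) ≤ ∑ i, ∑ j ∈ Ioi i, m i j := by
  set g : ι → ι → ℝ := fun i j ↦ if τ j = τ i then w (τ i) / 2 else 0 with hg
  have hsymm : ∀ i j, g i j = g j i := fun i j ↦ by
    by_cases h : τ j = τ i
    · simp [hg, h]
    · simp [hg, h, Ne.symm h]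
  have hrow : ∀ i, ∑ j, g i j = n * (w (τ i) / 2) := fun i ↦ by
    rw [← sum_filter, sum_const, hτ, nsmul_eq_mul]
  have hdiag : ∀ i, g i i = w (τ i) / 2 := fun i ↦ if_pos rfl
  have hpairs := two_mul_sum_sum_Ioi_of_symm g hsymm
  rw [sum_congr rfl fun i _ ↦ hrow i, sum_congr rfl fun i _ ↦ hdiag i, ← mul_sum,
    ← sum_div] at hpairs
  calc ((n : ℝ) - 1) / 4 * ∑ i, w (τ i) = ∑ i, ∑ j ∈ Ioi i, g i j := by linarith
    _ ≤ ∑ i, ∑ j ∈ Ioi i, m i j := by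
      refine sum_le_sum fun i _ ↦ sum_le_sum fun j hj ↦ ?_
      have hij : i < j := mem_Ioi.1 hj
      by_cases h : τ j = τ i
      · simpa [hg, h] using hsame i j hij h.symm
      · simpa [hg, h] using hm i j hij

end PairSums

lemma card_filter_fst_eq {ι κ : Type*} [Fintype ι] [Fintype κ] [DecidableEq κ] {n : ℕ}
    (e : ι ≃ κ × Fin n) (k : κ) : #{j | (e j).1 = k} = n := by
  rw [card_filter, ← e.symm.sum_comp, Fintype.sum_prod_type]
  simp

lemma integrable_and_integral_sum_sum_Ioi {Ω ι : Type*} [MeasurableSpace Ω] {μ : Measure Ω}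
    [Fintype ι] [Preorder ι] [LocallyFiniteOrderTop ι] (f : ι → ι → Ω → ℝ)
    (hf : ∀ i j, i < j → Integrable (f i j) μ) :
    Integrable (fun ω ↦ ∑ i, ∑ j ∈ Ioi i, f i j ω) μ ∧
      ∫ ω, ∑ i, ∑ j ∈ Ioi i, f i j ω ∂μ = ∑ i, ∑ j ∈ Ioi i, ∫ ω, f i j ω ∂μ := by
  have hint : ∀ i, ∀ j ∈ Ioi i, Integrable (f i j) μ := fun i j hj ↦ hf i j (mem_Ioi.1 hj)
  refine ⟨integrable_finsetSum _ fun i _ ↦ integrable_finsetSum _ (hint i), ?_⟩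
  rw [integral_finsetSum _ fun i _ ↦ integrable_finsetSum _ (hint i)]
  exact sum_congr rfl fun i _ ↦ integral_finsetSum _ (hint i)

lemma two_sub_four_div_mul_le {x s M : ℝ} (hx : 0 ≤ x) (hM : (x - 1) / 4 * s ≤ M) :
    (2 - 4 / (x + 3)) * (s + M) ≤ s + 2 * M := by
  have hgap : s + 2 * M - (2 - 4 / (x + 3)) * (s + M) = (4 * M - (x - 1) * s) / (x + 3) := by
    field_simp
    ring
  rw [← sub_nonneg, hgap]
  exact div_nonneg (by linarith) (by positivity)

theorem stmt_2_general
    {Ω : Type*} [MeasurableSpace Ω] (μ : Measure Ω) [IsProbabilityMeasure μ]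
    (K n : ℕ)
    (lam : Fin K → ℝ) (hpos : ∀ k, 0 < lam k)
    (P : Fin K → Fin n → Ω → ℝ)
    (hmeas : ∀ k i, Measurable (P k i))
    (hdist : ∀ k i, Measure.map (P k i) μ = expMeasure (1 / lam k))
    (hindep : iIndepFun
      (fun p : Fin K × Fin n => P p.1 p.2) μ)
    (e : Fin (n * K) ≃ Fin K × Fin n)
    (CRR COPT : Ω → ℝ)
    (hCRR : ∀ ω, CRR ω =
      (∑ j : Fin (n * K), P (e j).1 (e j).2 ω) +
      2 * ∑ i : Fin (n * K), ∑ j ∈ Finset.Ioi i,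
        min (P (e i).1 (e i).2 ω) (P (e j).1 (e j).2 ω))
    (hCOPT : ∀ ω, COPT ω =
      (∑ j : Fin (n * K), P (e j).1 (e j).2 ω) +
      ∑ i : Fin (n * K), ∑ j ∈ Finset.Ioi i,
        min (P (e i).1 (e i).2 ω) (P (e j).1 (e j).2 ω)) :
    ∫ ω, CRR ω ∂μ ≥ (2 - 4 / ((n : ℝ) + 3)) * ∫ ω, COPT ω ∂μ := by
  set X : Fin (n * K) → Ω → ℝ := fun j ↦ P (e j).1 (e j).2
  have hrate : ∀ k, 0 < 1 / lam k := fun k ↦ one_div_pos.2 (hpos k)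
  have hX : ∀ j, Integrable (X j) μ ∧ ∫ ω, X j ω ∂μ = lam (e j).1 := fun j ↦ by
    simpa using integrable_and_integral_of_map_eq_expMeasure (hmeas _ _) (hrate _) (hdist _ _)
  have hmin : ∀ i j, i < j → Integrable (fun ω ↦ min (X i ω) (X j ω)) μ ∧
      ∫ ω, min (X i ω) (X j ω) ∂μ = (1 / lam (e i).1 + 1 / lam (e j).1)⁻¹ := fun i j hij ↦
    integrable_and_integral_min_of_indepFun (hmeas _ _) (hmeas _ _) (hrate _) (hrate _)
      (hdist _ _) (hdist _ _) (hindep.indepFun (e.injective.ne hij.ne))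
  have hsum_int : Integrable (fun ω ↦ ∑ j, X j ω) μ := integrable_finsetSum _ fun j _ ↦ (hX j).1
  have hsum : ∫ ω, ∑ j, X j ω ∂μ = ∑ j, lam (e j).1 := by
    rw [integral_finsetSum _ fun j _ ↦ (hX j).1]
    exact sum_congr rfl fun j _ ↦ (hX j).2
  obtain ⟨hpairs_int, hpairs⟩ := integrable_and_integral_sum_sum_Ioi
    (fun i j ω ↦ min (X i ω) (X j ω)) fun i j hij ↦ (hmin i j hij).1
  have hM := le_sum_sum_Ioi_of_card_fiber (fun j ↦ (e j).1) (fun i ↦ card_filter_fst_eq e _) lam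
    (fun i j ↦ ∫ ω, min (X i ω) (X j ω) ∂μ)
    (fun i j hij ↦ by rw [(hmin i j hij).2]; exact inv_nonneg.2 (add_pos (hrate _) (hrate _)).le)
    (fun i j hij hτ ↦ by rw [(hmin i j hij).2, ← hτ, ← two_mul, mul_one_div, inv_div])
  rw [funext hCRR, funext hCOPT, integral_add hsum_int (hpairs_int.const_mul 2),
    integral_add hsum_int hpairs_int, integral_const_mul, hsum, hpairs]
  exact two_sub_four_div_mul_le n.cast_nonneg hM

/-- The competitive ratio of Round-Robin is at least `2 - 4/(n+3)`:
`E[C_RR] ≥ (2 - 4/(n+3)) * E[C_OPT]`. -/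
theorem stmt_2
    {Ω : Type*} [MeasurableSpace Ω] (μ : Measure Ω) [IsProbabilityMeasure μ]
    (K n : ℕ) (hK : 1 ≤ K) (hn : 1 ≤ n)
    (lam : Fin K → ℝ) (hpos : ∀ k, 0 < lam k) (hmono : Monotone lam)
    (P : Fin K → Fin n → Ω → ℝ)
    (hmeas : ∀ k i, Measurable (P k i))
    (hdist : ∀ k i, Measure.map (P k i) μ = expMeasure (1 / lam k))
    (hindep : iIndepFun
      (fun p : Fin K × Fin n => P p.1 p.2) μ)
    (e : Fin (n * K) ≃ Fin K × Fin n)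
    (CRR COPT : Ω → ℝ)
    (hCRR : ∀ ω, CRR ω =
      (∑ j : Fin (n * K), P (e j).1 (e j).2 ω) +
      2 * ∑ i : Fin (n * K), ∑ j ∈ Finset.Ioi i,
        min (P (e i).1 (e i).2 ω) (P (e j).1 (e j).2 ω))
    (hCOPT : ∀ ω, COPT ω =
      (∑ j : Fin (n * K), P (e j).1 (e j).2 ω) +
      ∑ i : Fin (n * K), ∑ j ∈ Finset.Ioi i,
        min (P (e i).1 (e i).2 ω) (P (e j).1 (e j).2 ω)) :
    ∫ ω, CRR ω ∂μ ≥ (2 - 4 / ((n : ℝ) + 3)) * ∫ ω, COPT ω ∂μ :=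
  stmt_2_general μ K n lam hpos P hmeas hdist hindep e CRR COPT hCRR hCOPT
end

section
/- Let H_K = Σ_{k=1}^K 1/k, B_K = Σ_{k=1}^K 1/k², and A_K = Σ_{k=1}^K Σ_{ℓ=1}^{k−1} 1/(k² + ℓ²). Then the sequence (H_K − B_K/2)/(B_K/4 + A_K) converges to 4/π as K → ∞. -/
/-!
Comparing the inner sum with `∫₀^k dx / (k² + x²) = π / (4k)` gives
`π/(4k) - 1/k² ≤ Σ_{ℓ<k} 1/(k² + ℓ²) ≤ π/(4k)`, so `B_K/4 + A_K = (π/4) H_K + O(B_K)`.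
Since `B_K ≤ π²/6` is bounded while `H_K → ∞`, numerator and denominator are
`H_K + O(1)` and `(π/4) H_K + O(1)`, and their ratio tends to `4/π`.
-/

open Finset Filter Asymptotics Real
open scoped Topology

section Asymptotics

variable {α : Type*} {l : Filter α} {f g h : α → ℝ} {a b : ℝ}

theorem tendsto_div_of_sub_isBigO_one (hh : Tendsto h l atTop)
    (hf : (fun x => f x - a * h x) =O[l] fun _ => (1 : ℝ)) :
    Tendsto (fun x => f x / h x) l (𝓝 a) := by
  have hlittle : (fun x => f x - a * h x) =o[l] h :=
    hf.trans_isLittleO (isLittleO_one_left_iff ℝ |>.mpr (tendsto_norm_atTop_atTop.comp hh))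
  refine (by simpa using hlittle.tendsto_div_nhds_zero.const_add a : Tendsto _ l (𝓝 a)).congr' ?_
  filter_upwards [hh.eventually_ne_atTop 0] with x hx
  field_simp
  ring

theorem tendsto_div_of_sub_isBigO_one_of_sub_isBigO_one (hh : Tendsto h l atTop)
    (hf : (fun x => f x - a * h x) =O[l] fun _ => (1 : ℝ))
    (hg : (fun x => g x - b * h x) =O[l] fun _ => (1 : ℝ)) (hb : b ≠ 0) :
    Tendsto (fun x => f x / g x) l (𝓝 (a / b)) := by
  refine ((tendsto_div_of_sub_isBigO_one hh hf).div
    (tendsto_div_of_sub_isBigO_one hh hg) hb).congr' ?_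
  filter_upwards [hh.eventually_ne_atTop 0] with x hx
  exact div_div_div_cancel_right₀ hx _ _

end Asymptotics

theorem tendsto_sum_Icc_one_div_atTop :
    Tendsto (fun n : ℕ => ∑ k ∈ Icc 1 n, (1 : ℝ) / k) atTop atTop := by
  refine tendsto_sum_range_one_div_nat_succ_atTop.congr fun n => ?_
  rw [← Ico_add_one_right_eq_Icc, sum_Ico_eq_sum_range]
  simp [add_comm]

theorem Real.arctan_le_self {x : ℝ} (hx : 0 ≤ x) : arctan x ≤ x := by
  simpa [tan_arctan] using le_tan (arctan_nonneg.mpr hx) (arctan_lt_pi_div_two x)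

theorem antitoneOn_one_div_sq_add_sq {c : ℝ} (hc : c ≠ 0) :
    AntitoneOn (fun x : ℝ => 1 / (c ^ 2 + x ^ 2)) (Set.Ici 0) := by
  intro x hx y _ hxy
  have : x ^ 2 ≤ y ^ 2 := pow_le_pow_left₀ hx hxy 2
  dsimp only
  gcongr

theorem integral_one_div_sq_add_sq {a b c : ℝ} (hc : c ≠ 0) :
    ∫ x in a..b, 1 / (c ^ 2 + x ^ 2) = c⁻¹ * (arctan (b / c) - arctan (a / c)) := by
  simp only [one_div, integral_inv_sq_add_sq hc]

section LatticeSum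

variable {k : ℕ}

theorem sum_Ico_one_div_sq_add_sq_le (hk : 0 < k) :
    ∑ l ∈ Ico 1 k, 1 / ((k : ℝ) ^ 2 + (l : ℝ) ^ 2) ≤ π / 4 / k := by
  have hk' : (k : ℝ) ≠ 0 := by positivity
  calc ∑ l ∈ Ico 1 k, 1 / ((k : ℝ) ^ 2 + (l : ℝ) ^ 2)
      ≤ ∑ l ∈ Ico 1 (k + 1), 1 / ((k : ℝ) ^ 2 + (l : ℝ) ^ 2) :=
        sum_le_sum_of_subset_of_nonneg (Ico_subset_Ico_right k.le_succ)
          fun _ _ _ => by positivity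
    _ = ∑ i ∈ Ico 0 k, 1 / ((k : ℝ) ^ 2 + ((i + 1 : ℕ) : ℝ) ^ 2) :=
        (sum_Ico_add' (fun l : ℕ => 1 / ((k : ℝ) ^ 2 + (l : ℝ) ^ 2)) 0 k 1).symm
    _ ≤ ∫ x in (0 : ℕ)..(k : ℕ), 1 / ((k : ℝ) ^ 2 + x ^ 2) :=
        (antitoneOn_one_div_sq_add_sq hk').mono (by simp [Set.Icc_subset_Ici_self])
          |>.sum_le_integral_Ico k.zero_le
    _ = π / 4 / k := by
        rw [integral_one_div_sq_add_sq hk']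
        simp [div_self hk', arctan_one, div_eq_inv_mul]

theorem le_sum_Ico_one_div_sq_add_sq (hk : 0 < k) :
    π / 4 / k - 1 / (k : ℝ) ^ 2 ≤ ∑ l ∈ Ico 1 k, 1 / ((k : ℝ) ^ 2 + (l : ℝ) ^ 2) := by
  have hk' : (k : ℝ) ≠ 0 := by positivity
  have harctan : arctan (1 / k) ≤ 1 / k := arctan_le_self (by positivity)
  calc π / 4 / k - 1 / (k : ℝ) ^ 2 = (k : ℝ)⁻¹ * (π / 4 - 1 / k) := by ring
    _ ≤ (k : ℝ)⁻¹ * (π / 4 - arctan (1 / k)) := by gcongr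
    _ = ∫ x in (1 : ℕ)..(k : ℕ), 1 / ((k : ℝ) ^ 2 + x ^ 2) := by
        rw [integral_one_div_sq_add_sq hk']
        simp [div_self hk', arctan_one]
    _ ≤ ∑ l ∈ Ico 1 k, 1 / ((k : ℝ) ^ 2 + (l : ℝ) ^ 2) :=
        (antitoneOn_one_div_sq_add_sq hk').mono
            (fun x hx => zero_le_one.trans (by simpa using hx.1))
          |>.integral_le_sum_Ico hk

theorem abs_sum_Icc_one_div_sq_add_sq_sub_le (hk : 0 < k) :
    |1 / (k : ℝ) ^ 2 / 4 + ∑ l ∈ Icc 1 (k - 1), 1 / ((k : ℝ) ^ 2 + (l : ℝ) ^ 2) - π / 4 / k|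
      ≤ 1 / (k : ℝ) ^ 2 := by
  have hIcc : Icc 1 (k - 1) = Ico 1 k := by ext; simp; omega
  have hpos : 0 < 1 / (k : ℝ) ^ 2 := by positivity
  rw [hIcc, abs_le]
  constructor <;>
    linarith [sum_Ico_one_div_sq_add_sq_le hk, le_sum_Ico_one_div_sq_add_sq hk]

end LatticeSum

theorem sum_Icc_one_div_sq_le (K : ℕ) : ∑ k ∈ Icc 1 K, (1 : ℝ) / (k : ℝ) ^ 2 ≤ π ^ 2 / 6 :=
  sum_le_hasSum _ (fun _ _ => by positivity) hasSum_zeta_two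

theorem abs_sum_lattice_sub_pi_div_four_mul_harmonic_le (K : ℕ) :
    |(∑ k ∈ Icc 1 K, (1 : ℝ) / (k : ℝ) ^ 2) / 4
        + ∑ k ∈ Icc 1 K, ∑ l ∈ Icc 1 (k - 1), 1 / ((k : ℝ) ^ 2 + (l : ℝ) ^ 2)
        - π / 4 * ∑ k ∈ Icc 1 K, (1 : ℝ) / k| ≤ π ^ 2 / 6 := calc
  _ = |∑ k ∈ Icc 1 K, (1 / (k : ℝ) ^ 2 / 4
        + ∑ l ∈ Icc 1 (k - 1), 1 / ((k : ℝ) ^ 2 + (l : ℝ) ^ 2) - π / 4 / k)| := by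
      simp only [sum_div, mul_sum, ← sum_add_distrib, ← sum_sub_distrib, mul_one_div]
  _ ≤ ∑ k ∈ Icc 1 K, 1 / (k : ℝ) ^ 2 := by
      refine (abs_sum_le_sum_abs _ _).trans (sum_le_sum fun k hk => ?_)
      exact abs_sum_Icc_one_div_sq_add_sq_sub_le (mem_Icc.mp hk).1
  _ ≤ π ^ 2 / 6 := sum_Icc_one_div_sq_le K

/-- `(H_K - B_K/2)/(B_K/4 + A_K) → 4/π` as `K → ∞`, where `H_K` is the harmonic
number, `B_K = Σ_{k≤K} 1/k²` and `A_K = Σ_{k≤K} Σ_{ℓ<k} 1/(k²+ℓ²)`. -/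
theorem stmt_8
    (H B A : ℕ → ℝ)
    (hH : ∀ K, H K = ∑ k ∈ Finset.Icc 1 K, (1 : ℝ) / k)
    (hB : ∀ K, B K = ∑ k ∈ Finset.Icc 1 K, (1 : ℝ) / (k : ℝ) ^ 2)
    (hA : ∀ K, A K = ∑ k ∈ Finset.Icc 1 K, ∑ l ∈ Finset.Icc 1 (k - 1),
      (1 : ℝ) / ((k : ℝ) ^ 2 + (l : ℝ) ^ 2)) :
    Tendsto (fun K => (H K - B K / 2) / (B K / 4 + A K)) atTop
      (nhds (4 / Real.pi)) := by
  have hH_top : Tendsto H atTop atTop :=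
    tendsto_sum_Icc_one_div_atTop.congr fun K => (hH K).symm
  have hnum : (fun K => H K - B K / 2 - 1 * H K) =O[atTop] fun _ => (1 : ℝ) := by
    refine IsBigO.of_bound (π ^ 2 / 6) (.of_forall fun K => ?_)
    have hB_nonneg : 0 ≤ B K := by rw [hB]; positivity
    have := hB K ▸ sum_Icc_one_div_sq_le K
    rw [norm_one, mul_one, Real.norm_eq_abs, abs_le]
    constructor <;> linarith
  have hden : (fun K => B K / 4 + A K - π / 4 * H K) =O[atTop] fun _ => (1 : ℝ) := by
    refine IsBigO.of_bound (π ^ 2 / 6) (.of_forall fun K => ?_)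
    rw [norm_one, mul_one, Real.norm_eq_abs, hB, hA, hH]
    exact abs_sum_lattice_sub_pi_div_four_mul_harmonic_le K
  simpa [one_div_div] using
    tendsto_div_of_sub_isBigO_one_of_sub_isBigO_one hH_top hnum hden (by positivity)
end

section
/- Let X_1, X_2, … be a sequence of independent Bernoulli random variables with mean μ ∈ (0,1), and let μ̂_s = (1/s)·Σ_{t=1}^s X_t. Let ε ∈ (0, μ) and c > 0. Then Σ_{s=1}^∞ P( μ̂_s < μ and d(μ̂_s, μ) > c/s + d(μ − ε, μ) ) ≤ exp(−c)/d(μ − ε, μ), where d(p, q) = p·log(p/q) + (1−p)·log((1−p)/(1−q)) is the Kullback–Leibler divergence between Bernoulli distributions of means p and q. -/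
open MeasureTheory ProbabilityTheory Finset Real
open scoped ENNReal unitInterval

/-!
Chernoff's bound with the optimal exponential tilt gives `P(μ̂_n ≤ a) ≤ exp (-n d(a, p))` for
`0 < a < p`. Since `d(·, p)` decreases strictly on `[0, p]`, the event `μ̂_n < p, d(μ̂_n, p) > θ`
lies inside `μ̂_n ≤ a` for the level `a` with `d(a, p) = θ`, and is null when `θ ≥ d(0, p)`; so it
has probability at most `exp (-n θ)`. For `θ = c/n + d(p - ε, p)` these bounds form a geometric
series with sum `e^{-c} / (e^{d(p-ε,p)} - 1) ≤ e^{-c} / d(p - ε, p)`.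
-/

noncomputable def klBern (x y : ℝ) : ℝ :=
  x * log (x / y) + (1 - x) * log ((1 - x) / (1 - y))

lemma mul_log_div (a : ℝ) {b : ℝ} (hb : b ≠ 0) : a * log (a / b) = a * log a - a * log b := by
  rcases eq_or_ne a 0 with rfl | ha
  · simp
  · rw [log_div ha hb, mul_sub]

lemma klBern_eq_neg_negMulLog {p : ℝ} (hp0 : 0 < p) (hp1 : p < 1) (x : ℝ) :
    klBern x p = -negMulLog x - negMulLog (1 - x) - x * log p - (1 - x) * log (1 - p) := by
  rw [klBern, mul_log_div x hp0.ne', mul_log_div (1 - x) (sub_ne_zero.2 hp1.ne'), negMulLog,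
    negMulLog]
  ring

lemma klBern_self (p : ℝ) : klBern p p = 0 := by
  simp [klBern]

lemma continuous_klBern_left {p : ℝ} (hp0 : 0 < p) (hp1 : p < 1) :
    Continuous fun x ↦ klBern x p := by
  simp_rw [klBern_eq_neg_negMulLog hp0 hp1]
  fun_prop

lemma hasDerivAt_klBern_left {p x : ℝ} (hp0 : 0 < p) (hp1 : p < 1) (hx0 : 0 < x) (hx1 : x < 1) :
    HasDerivAt (fun x ↦ klBern x p) (log x - log p - (log (1 - x) - log (1 - p))) x := by
  have hsub : HasDerivAt (fun x : ℝ ↦ 1 - x) (-1) x := by simpa using (hasDerivAt_id x).const_sub 1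
  have h := (((hasDerivAt_negMulLog hx0.ne').neg.sub
    ((hasDerivAt_negMulLog (sub_ne_zero.2 hx1.ne')).comp x hsub)).sub
    ((hasDerivAt_id x).mul_const (log p))).sub (hsub.mul_const (log (1 - p)))
  simp_rw [klBern_eq_neg_negMulLog hp0 hp1]
  exact h.congr_deriv (by ring)

lemma strictAntiOn_klBern_left {p : ℝ} (hp0 : 0 < p) (hp1 : p < 1) :
    StrictAntiOn (fun x ↦ klBern x p) (Set.Icc 0 p) := by
  refine strictAntiOn_of_deriv_neg (convex_Icc 0 p) (continuous_klBern_left hp0 hp1).continuousOn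
    fun x hx ↦ ?_
  rw [interior_Icc] at hx
  rw [(hasDerivAt_klBern_left hp0 hp1 hx.1 (hx.2.trans hp1)).deriv]
  have := log_lt_log hx.1 hx.2
  have := log_lt_log (by linarith [hx.2]) (by linarith [hx.2] : 1 - p < 1 - x)
  linarith

lemma klBern_pos {p x : ℝ} (hp0 : 0 < p) (hp1 : p < 1) (hx0 : 0 ≤ x) (hxp : x < p) :
    0 < klBern x p := by
  simpa [klBern_self] using
    strictAntiOn_klBern_left hp0 hp1 ⟨hx0, hxp.le⟩ ⟨hp0.le, le_rfl⟩ hxp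

lemma exists_klBern_eq {p θ : ℝ} (hp0 : 0 < p) (hp1 : p < 1) (hθ : θ ∈ Set.Ioo 0 (klBern 0 p)) :
    ∃ a ∈ Set.Ioo 0 p, klBern a p = θ := by
  nth_rw 1 [← klBern_self p] at hθ
  exact intermediate_value_Ioo' hp0.le (continuous_klBern_left hp0 hp1).continuousOn hθ

lemma lt_of_klBern_lt_klBern {p a x : ℝ} (hp0 : 0 < p) (hp1 : p < 1) (ha : a ∈ Set.Icc 0 p)
    (hxp : x < p) (h : klBern a p < klBern x p) : x < a := by
  by_contra! hax
  exact h.not_ge <| (strictAntiOn_klBern_left hp0 hp1).antitoneOn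
    ha ⟨ha.1.trans hax, hxp.le⟩ hax

lemma ofReal_smul_dirac_add_eq_bernoulliMeasure (p : I) :
    ENNReal.ofReal (1 - p) • Measure.dirac (0 : ℝ) + ENNReal.ofReal p • Measure.dirac 1 =
      Ber((1 : ℝ), 0, p) := by
  rw [bernoulliMeasure_def, add_comm]
  congr 2 <;> rw [ENNReal.ofReal, ENNReal.coe_inj] <;> ext <;>
    simp [p.2.1, p.2.2]

section Bernoulli

variable {Ω : Type*} [MeasurableSpace Ω] {μ : Measure Ω} {p : I}

lemma integrable_exp_mul_of_map_eq_bernoulliMeasure {Y : Ω → ℝ} (hY : AEMeasurable Y μ)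
    (h : μ.map Y = Ber((1 : ℝ), 0, p)) (l : ℝ) :
    Integrable (fun ω ↦ exp (l * Y ω)) μ := by
  have := integrable_bernoulliMeasure (1 : ℝ) 0 p fun y ↦ exp (l * y)
  rw [← h] at this
  exact this.comp_aemeasurable hY

lemma mgf_of_map_eq_bernoulliMeasure {Y : Ω → ℝ} (hY : AEMeasurable Y μ)
    (h : μ.map Y = Ber((1 : ℝ), 0, p)) (l : ℝ) :
    mgf Y μ l = 1 - p + p * exp l := by
  rw [← mgf_id_map hY, h, mgf, integral_bernoulliMeasure]
  simp only [id, mul_one, mul_zero, exp_zero, smul_eq_mul]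
  ring

lemma ae_nonneg_of_map_eq_bernoulliMeasure {Y : Ω → ℝ} (hY : AEMeasurable Y μ)
    (h : μ.map Y = Ber((1 : ℝ), 0, p)) : ∀ᵐ ω ∂μ, 0 ≤ Y ω := by
  refine ae_of_ae_map hY ?_
  rw [h, ae_iff]
  simpa using bernoulliMeasure_apply_of_notMem_of_notMem p (measurableSet_lt measurable_id
    measurable_const : MeasurableSet {y : ℝ | y < 0}) (by norm_num) (by norm_num)

variable {X : ℕ → Ω → ℝ}

theorem measureReal_sum_le_le_exp_neg_klBern [IsProbabilityMeasure μ]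
    (hmeas : ∀ t, Measurable (X t)) (hX : ∀ t, μ.map (X t) = Ber((1 : ℝ), 0, p))
    (hindep : iIndepFun X μ) (hp1 : (p : ℝ) < 1) (n : ℕ) {a : ℝ} (ha0 : 0 < a) (hap : a < p) :
    μ.real {ω | ∑ t ∈ range n, X t ω ≤ n * a} ≤ exp (-(n * klBern a p)) := by
  have hp0 : 0 < (p : ℝ) := ha0.trans hap
  have ha1 : a < 1 := hap.trans hp1
  have h1a : 0 < 1 - a := by linarith
  have h1p : 0 < 1 - (p : ℝ) := by linarith
  -- the optimal tilt `l` makes `a` the mean of the tilted Bernoulli law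
  set l := log (a / p) - log ((1 - a) / (1 - p))
  have hl : l ≤ 0 := by
    have := log_nonpos (by positivity) ((div_le_one hp0).2 hap.le)
    have := log_nonneg ((one_le_div h1p).2 (by linarith : 1 - (p : ℝ) ≤ 1 - a))
    linarith
  have hmgf (t : ℕ) : mgf (X t) μ l = exp (-log ((1 - a) / (1 - p))) := by
    rw [mgf_of_map_eq_bernoulliMeasure (hmeas t).aemeasurable (hX t), exp_sub, exp_neg,
      exp_log (by positivity), exp_log (by positivity)]
    field_simp
    ring
  have hint := hindep.integrable_exp_mul_sum hmeas (s := range n) fun t _ ↦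
    integrable_exp_mul_of_map_eq_bernoulliMeasure (hmeas t).aemeasurable (hX t) l
  have := measure_le_le_exp_mul_mgf (n * a) hl hint
  rw [hindep.mgf_sum hmeas, prod_congr rfl fun t _ ↦ hmgf t, prod_const, card_range,
    ← exp_nat_mul, ← exp_add] at this
  convert this using 2
  · simp [Finset.sum_apply]
  · simp only [klBern, l]
    ring

theorem measure_mean_lt_klBern_gt_le [IsProbabilityMeasure μ]
    (hmeas : ∀ t, Measurable (X t)) (hX : ∀ t, μ.map (X t) = Ber((1 : ℝ), 0, p))
    (hindep : iIndepFun X μ) (hp0 : 0 < (p : ℝ)) (hp1 : (p : ℝ) < 1) {n : ℕ} (hn : 0 < n)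
    {θ : ℝ} (hθ : 0 < θ) :
    μ {ω | (∑ t ∈ range n, X t ω) / n < p ∧ θ < klBern ((∑ t ∈ range n, X t ω) / n) p} ≤
      ENNReal.ofReal (exp (-(n * θ))) := by
  have hn' : (0 : ℝ) < n := by exact_mod_cast hn
  by_cases hθ0 : θ < klBern 0 p
  · obtain ⟨a, ha, rfl⟩ := exists_klBern_eq hp0 hp1 ⟨hθ, hθ0⟩
    calc _ ≤ μ {ω | ∑ t ∈ range n, X t ω ≤ n * a} := by
          refine measure_mono fun ω ⟨hlt, hkl⟩ ↦ ?_
          have := lt_of_klBern_lt_klBern hp0 hp1 (Set.Ioo_subset_Icc_self ha) hlt hkl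
          rw [div_lt_iff₀ hn'] at this
          exact (this.trans_eq (mul_comm _ _)).le
      _ = ENNReal.ofReal (μ.real {ω | ∑ t ∈ range n, X t ω ≤ n * a}) := by
          rw [ofReal_measureReal]
      _ ≤ _ := ENNReal.ofReal_le_ofReal
          (measureReal_sum_le_le_exp_neg_klBern hmeas hX hindep hp1 n ha.1 ha.2)
  · -- a nonnegative empirical mean below `p` has divergence at most `klBern 0 p ≤ θ`
    refine (measure_eq_zero_iff_ae_notMem.2 ?_).trans_le zero_le
    filter_upwards [ae_all_iff.2 fun t ↦
      ae_nonneg_of_map_eq_bernoulliMeasure (hmeas t).aemeasurable (hX t)] with ω hω ⟨hlt, hkl⟩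
    have h0 : 0 ≤ (∑ t ∈ range n, X t ω) / n := div_nonneg (sum_nonneg fun t _ ↦ hω t) hn'.le
    exact hθ0 (hkl.trans_le <| (strictAntiOn_klBern_left hp0 hp1).antitoneOn
      ⟨le_rfl, hp0.le⟩ ⟨h0, hlt.le⟩ h0)

end Bernoulli

lemma hasSum_exp_neg_succ_mul {d : ℝ} (hd : 0 < d) :
    HasSum (fun s : ℕ ↦ exp (-((s + 1) * d))) (exp d - 1)⁻¹ := by
  have hr : exp (-d) < 1 := exp_lt_one_iff.2 (by linarith)
  have h := (hasSum_geometric_of_lt_one (exp_pos _).le hr).mul_left (exp (-d))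
  rw [show exp (-d) * (1 - exp (-d))⁻¹ = (exp d - 1)⁻¹ by rw [exp_neg]; field_simp] at h
  refine h.congr_fun fun s ↦ ?_
  rw [← exp_nat_mul, ← exp_add]
  ring_nf

/-- For i.i.d. Bernoulli(μ) samples, `ε ∈ (0, μ)` and `c > 0`,
`Σ_{s≥1} P(μ̂_s < μ and d(μ̂_s, μ) > c/s + d(μ−ε, μ)) ≤ exp(−c)/d(μ−ε, μ)`. -/
theorem stmt_14
    {Ω : Type*} [MeasurableSpace Ω] (μ : Measure Ω) [IsProbabilityMeasure μ]
    (p : ℝ) (hp : p ∈ Set.Ioo (0 : ℝ) 1)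
    (X : ℕ → Ω → ℝ)
    (hmeas : ∀ t, Measurable (X t))
    -- each `X t` is Bernoulli with mean `p`
    (hdist : ∀ t, Measure.map (X t) μ =
      ENNReal.ofReal (1 - p) • Measure.dirac (0 : ℝ) +
        ENNReal.ofReal p • Measure.dirac (1 : ℝ))
    (hindep : iIndepFun X μ)
    (muhat : ℕ → Ω → ℝ)
    (hmuhat : ∀ s ω, muhat s ω = (∑ t ∈ Finset.range s, X t ω) / s)
    -- Bernoulli Kullback-Leibler divergence
    (d : ℝ → ℝ → ℝ)
    (hd : ∀ x y, d x y = x * Real.log (x / y) + (1 - x) * Real.log ((1 - x) / (1 - y)))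
    (ε : ℝ) (hε : ε ∈ Set.Ioo 0 p) (c : ℝ) (hc : 0 < c) :
    (∑' s : ℕ, μ {ω | muhat (s + 1) ω < p ∧
        c / ((s : ℝ) + 1) + d (p - ε) p < d (muhat (s + 1) ω) p}) ≤
      ENNReal.ofReal (Real.exp (-c) / d (p - ε) p) := by
  obtain rfl : d = klBern := funext₂ hd
  obtain rfl : muhat = fun s ω ↦ (∑ t ∈ range s, X t ω) / s := funext₂ hmuhat
  set q : I := ⟨p, Set.Ioo_subset_Icc_self hp⟩
  have hX (t : ℕ) : μ.map (X t) = Ber((1 : ℝ), 0, q) :=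
    (hdist t).trans (ofReal_smul_dirac_add_eq_bernoulliMeasure q)
  set d₀ := klBern (p - ε) p
  have hd₀ : 0 < d₀ := klBern_pos hp.1 hp.2 (by linarith [hε.2]) (by linarith [hε.1])
  have hterm (s : ℕ) : μ {ω | (∑ t ∈ range (s + 1), X t ω) / ↑(s + 1) < p ∧
      c / ((s : ℝ) + 1) + d₀ < klBern ((∑ t ∈ range (s + 1), X t ω) / ↑(s + 1)) p} ≤
      ENNReal.ofReal (exp (-c) * exp (-((s + 1) * d₀))) := by
    refine (measure_mean_lt_klBern_gt_le (p := q) hmeas hX hindep hp.1 hp.2 s.succ_pos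
      (θ := c / ((s : ℝ) + 1) + d₀) (by positivity)).trans_eq ?_
    rw [← exp_add]
    congr 2
    push_cast
    field_simp
    ring
  have hsum := (hasSum_exp_neg_succ_mul hd₀).mul_left (exp (-c))
  calc _ ≤ ∑' s : ℕ, ENNReal.ofReal (exp (-c) * exp (-((s + 1) * d₀))) :=
        ENNReal.tsum_le_tsum hterm
    _ = ENNReal.ofReal (exp (-c) * (exp d₀ - 1)⁻¹) := by
      rw [← ENNReal.ofReal_tsum_of_nonneg (fun _ ↦ by positivity) hsum.summable, hsum.tsum_eq]
    _ ≤ _ := by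
      rw [div_eq_mul_inv]
      gcongr
      linarith [add_one_le_exp d₀]
end
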